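/- arXiv:2207.10512 — 3 statements merged into one kernel-verified Lean document; each statement's English description precedes it below -/
import Mathlib

section
/- Let p be an odd prime, k ≥ 1, and x = x̃ · p^ℓ with gcd(x̃, p) = 1, 0 < ℓ < k, and ℓ even. If x̃ is not a quadratic residue mod p then q² ≡ x (mod pᵏ) has no solutions; if x̃ is a quadratic residue mod p then q² ≡ x (mod pᵏ) has exactly 2·p^(ℓ/2) solutions q in {0,1,…,pᵏ−1}. -/
lemma aux_two (p : ℕ) (hp : p.Prime) (hodd : Odd p) : ¬ (p:ℤ) ∣ 2 := by
  intro h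
  have h2 : p ∣ 2 := by exact_mod_cast h
  have := (Nat.prime_dvd_prime_iff_eq hp Nat.prime_two).mp h2
  subst this
  simpa [Nat.odd_iff] using hodd

lemma aux_sign (p : ℕ) (hp : p.Prime) (hodd : Odd p) (j : ℕ)
    (s R : ℤ) (hs : ¬ (p:ℤ) ∣ s) (hd : (p:ℤ)^j ∣ (R - s) * (R + s)) :
    (p:ℤ)^j ∣ R - s ∨ (p:ℤ)^j ∣ R + s := by
  have hpint : Prime (p:ℤ) := Nat.prime_iff_prime_int.mp hp
  have hboth : ¬ ((p:ℤ) ∣ R - s ∧ (p:ℤ) ∣ R + s) := by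
    rintro ⟨h1, h2⟩
    have h3 : (p:ℤ) ∣ 2 * s := by
      have h4 := dvd_sub h2 h1
      have h5 : R + s - (R - s) = 2 * s := by ring
      rwa [h5] at h4
    rcases hpint.dvd_mul.mp h3 with h | h
    · exact aux_two p hp hodd h
    · exact hs h
  by_cases hc : (p:ℤ) ∣ R + s
  · have hnd : ¬ (p:ℤ) ∣ R - s := fun h => hboth ⟨h, hc⟩
    have hco : IsCoprime ((p:ℤ)^j) (R - s) := ((hpint.coprime_iff_not_dvd).mpr hnd).pow_left
    exact Or.inr (hco.dvd_of_dvd_mul_left hd)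
  · have hco : IsCoprime ((p:ℤ)^j) (R + s) := ((hpint.coprime_iff_not_dvd).mpr hc).pow_left
    exact Or.inl (hco.dvd_of_dvd_mul_right hd)



lemma aux_exists (p : ℕ) (hp : p.Prime) (hodd : Odd p) (xt : ℕ)
    (hxt : ¬ (p:ℤ) ∣ (xt:ℤ)) (hsq : IsSquare ((xt : ℕ) : ZMod p)) :
    ∀ n, 1 ≤ n → ∃ s : ℤ, (p:ℤ)^n ∣ s^2 - (xt:ℤ) := by
  haveI : Fact p.Prime := ⟨hp⟩
  intro n hn
  induction n, hn using Nat.le_induction with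
  | base =>
    obtain ⟨c, hc⟩ := hsq
    refine ⟨(c.val : ℤ), ?_⟩
    rw [pow_one, ← ZMod.intCast_zmod_eq_zero_iff_dvd]
    push_cast
    rw [ZMod.natCast_val, ZMod.cast_id, hc]
    ring
  | succ n hn ih =>
    obtain ⟨s, d, hd⟩ := ih
    obtain ⟨n', rfl⟩ : ∃ n', n = n' + 1 := ⟨n - 1, by omega⟩
    have hps : ¬ (p:ℤ) ∣ s := by
      intro h
      apply hxt
      have h1 : (p:ℤ) ∣ s ^ 2 := Dvd.dvd.pow h two_ne_zero
      have h2 : (p:ℤ) ∣ s ^ 2 - (xt:ℤ) := by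
        rw [hd]; exact dvd_mul_of_dvd_left (dvd_pow_self _ (by omega)) d
      have h3 := dvd_sub h1 h2
      simpa using h3
    set T : ZMod p := (-(d : ZMod p)) * (((2 * s : ℤ) : ZMod p))⁻¹ with hT
    set t : ℤ := (T.val : ℤ) with ht
    have h2s : ((2 * s : ℤ) : ZMod p) ≠ 0 := by
      rw [Ne, ZMod.intCast_zmod_eq_zero_iff_dvd]
      intro h
      have hpint : Prime (p:ℤ) := Nat.prime_iff_prime_int.mp hp
      rcases hpint.dvd_mul.mp h with h | h
      · exact aux_two p hp hodd h
      · exact hps h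
    have key : (p:ℤ) ∣ d + 2 * s * t := by
      rw [← ZMod.intCast_zmod_eq_zero_iff_dvd]
      have htT : ((t : ℤ) : ZMod p) = T := by
        rw [ht]; push_cast; rw [ZMod.natCast_val, ZMod.cast_id]
      push_cast
      rw [htT, hT]
      have hinv : ((2 * s : ℤ) : ZMod p) * (((2 * s : ℤ) : ZMod p))⁻¹ = 1 :=
        mul_inv_cancel₀ h2s
      push_cast at hinv ⊢
      linear_combination (-(d : ZMod p)) * hinv
    obtain ⟨e, he⟩ := key
    refine ⟨s + t * (p:ℤ) ^ (n' + 1), e + t ^ 2 * (p:ℤ) ^ n', ?_⟩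
    linear_combination hd + (p:ℤ) ^ (n' + 1) * he

theorem stmt_10 (p k ℓ xt : ℕ) (hp : p.Prime) (hodd : Odd p)
    (hl : 0 < ℓ) (hlk : ℓ < k) (hleven : Even ℓ) (hx : Nat.gcd xt p = 1) :
    (¬ IsSquare ((xt : ℕ) : ZMod p) →
      {q : ZMod (p ^ k) | q ^ 2 = ((xt * p ^ ℓ : ℕ) : ZMod (p ^ k))} = ∅) ∧
    (IsSquare ((xt : ℕ) : ZMod p) →
      {q : ZMod (p ^ k) | q ^ 2 = ((xt * p ^ ℓ : ℕ) : ZMod (p ^ k))}.ncard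
        = 2 * p ^ (ℓ / 2)) := by
  haveI : Fact p.Prime := ⟨hp⟩
  have hpz : (p:ℤ) ≠ 0 := by exact_mod_cast hp.ne_zero
  obtain ⟨m, rfl⟩ : ∃ m, ℓ = m + m := hleven
  obtain ⟨j, rfl⟩ : ∃ j, k = (m + m) + (j + 1) := ⟨k - (m + m) - 1, by omega⟩
  have hm1 : 1 ≤ m := by omega
  have hxt : ¬ (p:ℤ) ∣ (xt:ℤ) := by
    rw [Int.natCast_dvd_natCast]
    intro h
    exact hp.one_lt.ne' (Nat.dvd_one.mp (hx ▸ Nat.dvd_gcd h dvd_rfl))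
  -- core extraction
  have main : ∀ q : ZMod (p ^ ((m + m) + (j + 1))),
      q ^ 2 = ((xt * p ^ (m + m) : ℕ) : ZMod (p ^ ((m + m) + (j + 1)))) →
      ∃ R : ℤ, (p:ℤ) ^ (j + 1) ∣ R ^ 2 - (xt:ℤ) ∧
        q = (((p:ℤ) ^ m * R : ℤ) : ZMod (p ^ ((m + m) + (j + 1)))) := by
    intro q hq
    have hq' : (((q.val : ℤ) ^ 2 - (xt:ℤ) * (p:ℤ) ^ (m + m) : ℤ) :
        ZMod (p ^ ((m + m) + (j + 1)))) = 0 := by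
      push_cast
      rw [ZMod.natCast_val, ZMod.cast_id]
      rw [hq]
      push_cast
      ring
    rw [ZMod.intCast_zmod_eq_zero_iff_dvd] at hq'
    rw [show (((p:ℕ) ^ ((m + m) + (j + 1)) : ℕ) : ℤ) = (p:ℤ) ^ ((m + m) + (j + 1))
      by push_cast; ring] at hq'
    have h1 : (p:ℤ) ^ (m + m) ∣ (q.val : ℤ) ^ 2 := by
      have ha : (p:ℤ) ^ (m + m) ∣ (q.val : ℤ) ^ 2 - (xt:ℤ) * (p:ℤ) ^ (m + m) :=
        dvd_trans (pow_dvd_pow _ (by omega)) hq'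
      have hb : (p:ℤ) ^ (m + m) ∣ (xt:ℤ) * (p:ℤ) ^ (m + m) := dvd_mul_left _ _
      have := dvd_add ha hb
      simpa using this
    have h2 : (p:ℤ) ^ m ∣ (q.val : ℤ) := by
      rw [← Int.pow_dvd_pow_iff (two_ne_zero)]
      calc ((p:ℤ) ^ m) ^ 2 = (p:ℤ) ^ (m + m) := by ring
        _ ∣ (q.val : ℤ) ^ 2 := h1
    obtain ⟨R, hR⟩ := h2
    refine ⟨R, ?_, ?_⟩
    · have : (p:ℤ) ^ (m + m) * (p:ℤ) ^ (j + 1) ∣ (p:ℤ) ^ (m + m) * (R ^ 2 - (xt:ℤ)) := by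
        calc (p:ℤ) ^ (m + m) * (p:ℤ) ^ (j + 1) = (p:ℤ) ^ ((m + m) + (j + 1)) := by ring
          _ ∣ (q.val : ℤ) ^ 2 - (xt:ℤ) * (p:ℤ) ^ (m + m) := hq'
          _ = (p:ℤ) ^ (m + m) * (R ^ 2 - (xt:ℤ)) := by rw [hR]; ring
      exact (mul_dvd_mul_iff_left (pow_ne_zero _ hpz)).mp this
    · have hqv : ((q.val : ℕ) : ZMod (p ^ ((m + m) + (j + 1)))) = q := by
        rw [ZMod.natCast_val, ZMod.cast_id]
      rw [← hqv, ← hR]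
      exact (Int.cast_natCast _).symm
  have hcast : (((p ^ ((m + m) + (j + 1)) : ℕ) : ℤ)) = (p:ℤ) ^ ((m + m) + (j + 1)) := by
    push_cast; ring
  have key_iff : ∀ a b : ℤ, ((a : ZMod (p ^ ((m + m) + (j + 1)))) = (b : ZMod (p ^ ((m + m) + (j + 1))))) ↔
      (p:ℤ) ^ ((m + m) + (j + 1)) ∣ b - a := by
    intro a b
    rw [ZMod.intCast_eq_intCast_iff, Int.modEq_iff_dvd, hcast]
  have hdvd_iff : ∀ (n : ℕ) (a : ℤ), ((a : ZMod (p ^ n)) = 0) ↔ (p:ℤ) ^ n ∣ a := by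
    intro n a
    rw [ZMod.intCast_zmod_eq_zero_iff_dvd, Nat.cast_pow]
  constructor
  · -- non-residue case
    intro hns
    rw [Set.eq_empty_iff_forall_notMem]
    intro q hq
    simp only [Set.mem_setOf_eq] at hq
    obtain ⟨R, hR1, _⟩ := main q hq
    apply hns
    refine ⟨((R : ZMod p)), ?_⟩
    have hp1 : (p:ℤ) ∣ R ^ 2 - (xt:ℤ) :=
      dvd_trans (dvd_pow_self _ (Nat.succ_ne_zero j)) hR1
    have h0 : ((R ^ 2 - (xt:ℤ) : ℤ) : ZMod p) = 0 := by
      rw [ZMod.intCast_zmod_eq_zero_iff_dvd]; exact_mod_cast hp1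
    push_cast at h0
    linear_combination -h0
  · -- residue case
    intro hsq
    obtain ⟨s, hs⟩ := aux_exists p hp hodd xt hxt hsq (j + 1) (by omega)
    have hps : ¬ (p:ℤ) ∣ s := by
      intro hdl
      apply hxt
      have h1 : (p:ℤ) ∣ s ^ 2 := hdl.pow two_ne_zero
      have h2 : (p:ℤ) ∣ s ^ 2 - (xt:ℤ) :=
        dvd_trans (dvd_pow_self _ (Nat.succ_ne_zero j)) hs
      have h3 := dvd_sub h1 h2
      simpa using h3
    haveI : NeZero (p ^ m) := ⟨pow_ne_zero _ hp.pos.ne'⟩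
    set f : Bool × ZMod (p ^ m) → ZMod (p ^ ((m + m) + (j + 1))) :=
      fun z => ((((if z.1 then 1 else -1) * ((p:ℤ) ^ m * s)
        + ((z.2.val : ℤ) * (p:ℤ) ^ (m + (j + 1)))) : ℤ) : ZMod (p ^ ((m + m) + (j + 1)))) with hf
    obtain ⟨d, hd⟩ := hs
    have hrange : {q : ZMod (p ^ ((m + m) + (j + 1))) |
        q ^ 2 = ((xt * p ^ (m + m) : ℕ) : ZMod (p ^ ((m + m) + (j + 1))))} = Set.range f := by
      ext q
      simp only [Set.mem_setOf_eq, Set.mem_range]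
      constructor
      · intro hq
        obtain ⟨R, hR1, hR2⟩ := main q hq
        have hRs : (p:ℤ) ^ (j + 1) ∣ (R - s) * (R + s) := by
          have h4 := dvd_sub hR1 ⟨d, hd⟩
          have e4 : R ^ 2 - (xt:ℤ) - (s ^ 2 - (xt:ℤ)) = (R - s) * (R + s) := by ring
          rwa [e4] at h4
        have huval : ∀ c : ℤ, (p:ℤ) ^ m ∣ c - (((c : ZMod (p ^ m)).val : ℤ)) := by
          intro c
          rw [← hdvd_iff m]
          push_cast
          rw [ZMod.natCast_val, ZMod.cast_id]
          ring
        rcases aux_sign p hp hodd (j + 1) s R hps hRs with hcase | hcase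
        · obtain ⟨c, hc⟩ := hcase
          refine ⟨(true, (c : ZMod (p ^ m))), ?_⟩
          simp only [hf, eq_self_iff_true, if_true]
          rw [hR2, key_iff]
          obtain ⟨w, hw⟩ := huval c
          exact ⟨w, by linear_combination (p:ℤ) ^ m * hc + (p:ℤ) ^ (m + (j + 1)) * hw⟩
        · obtain ⟨c, hc⟩ := hcase
          refine ⟨(false, (c : ZMod (p ^ m))), ?_⟩
          simp only [hf, Bool.false_eq_true, if_false]
          rw [hR2, key_iff]
          obtain ⟨w, hw⟩ := huval c
          exact ⟨w, by linear_combination (p:ℤ) ^ m * hc + (p:ℤ) ^ (m + (j + 1)) * hw⟩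
      · rintro ⟨⟨ε, u⟩, rfl⟩
        have hX : ((xt * p ^ (m + m) : ℕ) : ZMod (p ^ ((m + m) + (j + 1))))
            = (((xt:ℤ) * (p:ℤ) ^ (m + m) : ℤ) : ZMod (p ^ ((m + m) + (j + 1)))) := by
          push_cast; ring
        cases ε
        · simp only [hf, Bool.false_eq_true, if_false]
          rw [← Int.cast_pow, hX, key_iff]
          exact ⟨-(d - 2 * s * (u.val:ℤ) + (u.val:ℤ) ^ 2 * (p:ℤ) ^ (j + 1)),
            by linear_combination (-(p:ℤ) ^ (m + m)) * hd⟩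
        · simp only [hf, eq_self_iff_true, if_true]
          rw [← Int.cast_pow, hX, key_iff]
          exact ⟨-(d + 2 * s * (u.val:ℤ) + (u.val:ℤ) ^ 2 * (p:ℤ) ^ (j + 1)),
            by linear_combination (-(p:ℤ) ^ (m + m)) * hd⟩
    have hinj : Function.Injective f := by
      rintro ⟨ε1, u1⟩ ⟨ε2, u2⟩ heq
      simp only [hf] at heq
      rw [key_iff] at heq
      obtain ⟨w, hw⟩ := heq
      have husame : ∀ u1' u2' : ZMod (p ^ m) , ∀ w' : ℤ,
          ((u2'.val : ℤ) - u1'.val) * (p:ℤ) ^ (m + (j + 1)) =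
            ((p:ℤ) ^ m * w') * (p:ℤ) ^ (m + (j + 1)) → u1' = u2' := by
        intro u1' u2' w' hcc
        have h5 : (u2'.val : ℤ) - u1'.val = (p:ℤ) ^ m * w' :=
          mul_right_cancel₀ (pow_ne_zero _ hpz) hcc
        have h6 : (((u2'.val : ℤ) - u1'.val : ℤ) : ZMod (p ^ m)) = 0 :=
          (hdvd_iff m _).mpr ⟨w', h5⟩
        push_cast at h6
        rw [ZMod.natCast_val, ZMod.cast_id, ZMod.natCast_val, ZMod.cast_id] at h6
        rw [sub_eq_zero] at h6
        exact h6.symm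
      have hbad : ∀ w' c' : ℤ, (2 * s) * (p:ℤ) ^ m =
          ((p:ℤ) ^ (j + 1) * c') * (p:ℤ) ^ m → False := by
        intro w' c' hcc
        have h5 : 2 * s = (p:ℤ) ^ (j + 1) * c' :=
          mul_right_cancel₀ (pow_ne_zero _ hpz) hcc
        have h6 : (p:ℤ) ∣ 2 * s := by
          rw [h5]
          exact dvd_mul_of_dvd_left (dvd_pow_self _ (Nat.succ_ne_zero j)) c'
        rcases (Nat.prime_iff_prime_int.mp hp).dvd_mul.mp h6 with h | h
        · exact aux_two p hp hodd h
        · exact hps h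
      cases ε1 <;> cases ε2 <;>
        simp only [Bool.false_eq_true, if_false, eq_self_iff_true, if_true] at hw
      · have := husame u1 u2 w (by linear_combination hw)
        rw [this]
      · exact (hbad w ((p:ℤ) ^ m * w - (((u2.val : ℤ)) - u1.val))
            (by linear_combination hw)).elim
      · exact (hbad w ((((u2.val : ℤ)) - u1.val) - (p:ℤ) ^ m * w)
            (by linear_combination -hw)).elim
      · have := husame u1 u2 w (by linear_combination hw)
        rw [this]
    rw [hrange, ← Nat.card_coe_set_eq, Nat.card_range_of_injective hinj,
      Nat.card_prod, Nat.card_zmod, Nat.card_eq_fintype_card, Fintype.card_bool]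
    have hm2 : (m + m) / 2 = m := by omega
    rw [hm2]
end

section
/- Let p be an odd prime and k ≥ 2, and fix z₁ with gcd(z₁,p)=1. For even ℓ with 0 < ℓ < k and x̃ with x̃ ≡ z₁² (mod p), gcd(x̃,p)=1, the system ỹ² ≡ x̃ (mod p^(k−ℓ)), ỹ ≡ z₁ (mod p), has exactly p^(ℓ/2) solutions ỹ modulo p^(k−ℓ/2). -/
/-!
Since `p` is coprime to `2 z₁`, Hensel lifting turns the root `z₁` of `y ^ 2 ≡ x̃ (mod p)` into a
root modulo every power of `p`, and the lift is unique: two roots `y, y'` congruent to `z₁` modulo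
`p` satisfy `p ^ m ∣ (y - y') (y + y')`, where `y + y' ≡ 2 z₁` is a unit modulo `p`. So the
solutions form a single residue class modulo `p ^ (k - ℓ)`, which has exactly `p ^ (ℓ / 2)`
representatives in `[0, p ^ (k - ℓ / 2))`.
-/

open Finset

theorem Int.ModEq.isCoprime {p a b : ℤ} (h : a ≡ b [ZMOD p]) (ha : IsCoprime p a) :
    IsCoprime p b := by
  obtain ⟨t, ht⟩ := h.dvd
  rw [show b = a + p * t by linarith]
  exact ha.add_mul_left_right t

theorem Int.exists_sq_modEq_pow_succ {p x z : ℤ} (hpz : IsCoprime p (2 * z))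
    (hxz : x ≡ z ^ 2 [ZMOD p]) (n : ℕ) :
    ∃ y, y ^ 2 ≡ x [ZMOD p ^ (n + 1)] ∧ y ≡ z [ZMOD p] := by
  induction n with
  | zero => exact ⟨z, by simpa using hxz.symm, rfl⟩
  | succ n ih =>
    obtain ⟨y, hy, hyz⟩ := ih
    obtain ⟨c, hc⟩ := hy.symm.dvd
    obtain ⟨v, u, huv⟩ := (hyz.symm.mul_left 2).isCoprime hpz
    -- Newton step `y ↦ y - (y ^ 2 - x) / (2 y)`, with `u` an inverse of `2 y` modulo `p`
    refine ⟨y - c * u * p ^ (n + 1), ?_, ?_⟩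
    · refine (Int.modEq_iff_dvd.mpr ⟨c * v + (c * u) ^ 2 * p ^ n, ?_⟩).symm
      linear_combination hc - c * p ^ (n + 1) * huv
    · refine Int.ModEq.trans (Int.modEq_iff_dvd.mpr ⟨c * u * p ^ n, ?_⟩) hyz
      ring

theorem Int.modEq_of_sq_modEq {p z y y' : ℤ} (hpz : IsCoprime p (2 * z))
    (hy : y ≡ z [ZMOD p]) (hy' : y' ≡ z [ZMOD p]) {m : ℕ}
    (h : y ^ 2 ≡ y' ^ 2 [ZMOD p ^ m]) : y ≡ y' [ZMOD p ^ m] := by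
  have hsum : IsCoprime p (y' + y) := by
    refine Int.ModEq.isCoprime ?_ hpz
    rw [two_mul]
    exact (hy'.add hy).symm
  refine Int.modEq_iff_dvd.mpr (hsum.pow_left.dvd_of_dvd_mul_right ?_)
  rw [mul_comm, ← sq_sub_sq]
  exact h.dvd

theorem Int.exists_forall_sq_modEq_and_modEq_iff {p x z : ℤ} (hpz : IsCoprime p (2 * z))
    (hxz : x ≡ z ^ 2 [ZMOD p]) {m : ℕ} (hm : m ≠ 0) :
    ∃ y₀, ∀ y, y ^ 2 ≡ x [ZMOD p ^ m] ∧ y ≡ z [ZMOD p] ↔ y ≡ y₀ [ZMOD p ^ m] := by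
  obtain ⟨y₀, hy₀, hy₀z⟩ := Int.exists_sq_modEq_pow_succ hpz hxz (m - 1)
  rw [Nat.sub_add_cancel (Nat.one_le_iff_ne_zero.mpr hm)] at hy₀
  refine ⟨y₀, fun y => ⟨fun ⟨hy, hyz⟩ => ?_, fun h => ⟨(h.pow 2).trans hy₀, ?_⟩⟩⟩
  · exact Int.modEq_of_sq_modEq hpz hyz hy₀z (hy.trans hy₀.symm)
  · exact (h.of_dvd (dvd_pow_self p hm)).trans hy₀z

theorem Nat.exists_forall_sq_modEq_and_modEq_iff {p x z : ℕ} (hpz : Nat.Coprime p (2 * z))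
    (hxz : x ≡ z ^ 2 [MOD p]) {m : ℕ} (hm : m ≠ 0) :
    ∃ y₀, ∀ y, y ^ 2 ≡ x [MOD p ^ m] ∧ y ≡ z [MOD p] ↔ y ≡ y₀ [MOD p ^ m] := by
  obtain ⟨y₀, hy₀⟩ := Int.exists_forall_sq_modEq_and_modEq_iff (p := p) (x := x) (z := z)
    (by exact_mod_cast Nat.isCoprime_iff_coprime.mpr hpz)
    (by exact_mod_cast Int.natCast_modEq_iff.mpr hxz) hm
  have hp : p ≠ 0 := by
    rintro rfl
    rw [Nat.coprime_zero_left] at hpz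
    omega
  obtain ⟨n, hn⟩ : ∃ n : ℕ, (n : ℤ) ≡ y₀ [ZMOD p ^ m] := by
    refine ⟨(y₀ % (p : ℤ) ^ m).toNat, ?_⟩
    rw [Int.toNat_of_nonneg (Int.emod_nonneg _ (pow_ne_zero _ (by exact_mod_cast hp)))]
    exact Int.mod_modEq _ _
  refine ⟨n, fun y => ?_⟩
  simp only [← Int.natCast_modEq_iff]
  push_cast
  rw [hy₀]
  exact ⟨fun h => h.trans hn.symm, fun h => h.trans hn⟩

theorem Nat.card_filter_range_mul_modEq {a : ℕ} (ha : 0 < a) (b v : ℕ) :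
    #{y ∈ range (a * b) | y ≡ v [MOD a]} = b := by
  rw [← Nat.count_eq_card_filter_range, Nat.count_modEq_card _ ha, Nat.mul_mod_right,
    Nat.mul_div_cancel_left _ ha]
  simp

theorem stmt_11_general (p k ℓ z₁ xt : ℕ) (hodd : Odd p)
    (hleven : Even ℓ) (hlk : ℓ < k)
    (hz : Nat.gcd z₁ p = 1) (hxz : xt % p = z₁ ^ 2 % p) :
    ((Finset.range (p ^ (k - ℓ / 2))).filter
      (fun y => y ^ 2 % p ^ (k - ℓ) = xt % p ^ (k - ℓ) ∧ y % p = z₁ % p)).card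
      = p ^ (ℓ / 2) := by
  obtain ⟨s, rfl⟩ := hleven
  have hpz : Nat.Coprime p (2 * z₁) :=
    Nat.Coprime.mul_right (Nat.coprime_two_right.mpr hodd) (Nat.Coprime.symm hz)
  obtain ⟨y₀, hy₀⟩ :=
    Nat.exists_forall_sq_modEq_and_modEq_iff hpz hxz (m := k - (s + s)) (by omega)
  rw [show (s + s) / 2 = s by omega, show k - s = k - (s + s) + s by omega, pow_add]
  exact (congrArg card (filter_congr fun y _ => hy₀ y)).trans
    (Nat.card_filter_range_mul_modEq (pow_pos hodd.pos _) _ _)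

theorem stmt_11 (p k ℓ z₁ xt : ℕ) (hp : p.Prime) (hodd : Odd p) (hk : 2 ≤ k)
    (hleven : Even ℓ) (hl : 0 < ℓ) (hlk : ℓ < k)
    (hz : Nat.gcd z₁ p = 1) (hxz : xt % p = z₁ ^ 2 % p) (hx : Nat.gcd xt p = 1) :
    ((Finset.range (p ^ (k - ℓ / 2))).filter
      (fun y => y ^ 2 % p ^ (k - ℓ) = xt % p ^ (k - ℓ) ∧ y % p = z₁ % p)).card
      = p ^ (ℓ / 2) :=
  stmt_11_general p k ℓ z₁ xt hodd hleven hlk hz hxz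
end

section
/- Let p be an odd prime and write φ(pᵏ) = 2^θ · μ with μ odd. Then for every divisor d of μ, the number of cycles of length ord_d(2) in the functional graph of squaring on the units (Z/pᵏ)^× contributed by elements whose (multiplicative) order has odd part d is φ(d)/ord_d(2); in particular, a unit x ∈ (Z/pᵏ)^× is periodic under squaring if and only if its multiplicative order is odd, and its exact period under squaring equals ord_d(2) where d is its multiplicative order. -/
/-!
In any group, `u ^ 2 ^ n = u` iff `2 ^ n ≡ 1` modulo `orderOf u`, so the period of `u` under
squaring is the order of `2` in `ZMod (orderOf u)`, which is positive exactly when `orderOf u`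
is odd. Squaring preserves the order `d` of an element when `d` is odd, so the elements of
order `d` split into squaring cycles of common length `ord_d(2)`; as `(ZMod (p ^ k))ˣ` is
cyclic, there are `φ(d)` such elements.
-/

open Function Finset

namespace Function
variable {α : Type*} [DecidableEq α]

noncomputable def periodicOrbitFinset (f : α → α) (x : α) : Finset α :=
  (range (minimalPeriod f x)).image (f^[·] x)

variable {f : α → α} {x y : α}

theorem card_periodicOrbitFinset : #(periodicOrbitFinset f x) = minimalPeriod f x := by
  rw [periodicOrbitFinset, card_image_of_injOn, card_range]
  simpa using iterate_injOn_Iio_minimalPeriod (f := f) (x := x)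

theorem mem_periodicOrbitFinset_iff (hx : x ∈ periodicPts f) :
    y ∈ periodicOrbitFinset f x ↔ y ∈ periodicOrbit f x := by
  rw [mem_periodicOrbit_iff hx, periodicOrbitFinset, mem_image]
  refine ⟨fun ⟨n, _, hn⟩ => ⟨n, hn⟩, fun ⟨n, hn⟩ => ⟨n % minimalPeriod f x, ?_, ?_⟩⟩
  · exact mem_range.mpr (Nat.mod_lt _ (minimalPeriod_pos_of_mem_periodicPts hx))
  · rw [iterate_mod_minimalPeriod_eq, hn]

theorem self_mem_periodicOrbitFinset (hx : x ∈ periodicPts f) : x ∈ periodicOrbitFinset f x :=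
  (mem_periodicOrbitFinset_iff hx).mpr (self_mem_periodicOrbit hx)

theorem periodicOrbitFinset_eq_of_mem (hx : x ∈ periodicPts f)
    (hy : y ∈ periodicOrbitFinset f x) : periodicOrbitFinset f y = periodicOrbitFinset f x := by
  obtain ⟨n, rfl⟩ := (mem_periodicOrbit_iff hx).mp ((mem_periodicOrbitFinset_iff hx).mp hy)
  have hy' : f^[n] x ∈ periodicPts f := by
    rw [← minimalPeriod_pos_iff_mem_periodicPts, minimalPeriod_apply_iterate hx]
    exact minimalPeriod_pos_of_mem_periodicPts hx
  ext z
  rw [mem_periodicOrbitFinset_iff hx, mem_periodicOrbitFinset_iff hy',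
    periodicOrbit_apply_iterate_eq hx]

theorem pairwiseDisjoint_periodicOrbitFinset {T : Finset α} (hT : ∀ x ∈ T, x ∈ periodicPts f) :
    (T.image (periodicOrbitFinset f) : Set (Finset α)).PairwiseDisjoint id := by
  simp only [coe_image, Set.PairwiseDisjoint, Set.Pairwise, Set.mem_image, mem_coe]
  rintro _ ⟨x, hx, rfl⟩ _ ⟨y, hy, rfl⟩ hne
  refine disjoint_left.mpr fun z hzx hzy => hne ?_
  rw [← periodicOrbitFinset_eq_of_mem (hT x hx) hzx, periodicOrbitFinset_eq_of_mem (hT y hy) hzy]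

theorem periodicOrbitFinset_subset {T : Finset α} (hT : Set.MapsTo f T T) (hx : x ∈ T) :
    periodicOrbitFinset f x ⊆ T := by
  intro y hy
  obtain ⟨n, -, rfl⟩ := mem_image.mp hy
  exact hT.iterate n hx

theorem card_image_periodicOrbitFinset_mul {T : Finset α} {m : ℕ} (hT : Set.MapsTo f T T)
    (hm : ∀ x ∈ T, minimalPeriod f x = m) (hm0 : 0 < m) :
    #(T.image (periodicOrbitFinset f)) * m = #T := by
  have hper : ∀ x ∈ T, x ∈ periodicPts f := fun x hx =>
    minimalPeriod_pos_iff_mem_periodicPts.mp (hm x hx ▸ hm0)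
  have hunion : (T.image (periodicOrbitFinset f)).biUnion id = T := by
    refine Subset.antisymm ?_ fun x hx => mem_biUnion.mpr ?_
    · simp only [biUnion_subset, mem_image, forall_exists_index, and_imp]
      rintro _ x hx rfl
      exact periodicOrbitFinset_subset hT hx
    · exact ⟨_, mem_image_of_mem _ hx, self_mem_periodicOrbitFinset (hper x hx)⟩
  conv_rhs => rw [← hunion, card_biUnion (pairwiseDisjoint_periodicOrbitFinset hper)]
  rw [← smul_eq_mul, ← sum_const]
  refine sum_congr rfl fun s hs => ?_
  obtain ⟨x, hx, rfl⟩ := mem_image.mp hs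
  rw [id, card_periodicOrbitFinset, hm x hx]

end Function

theorem orderOf_two_pos_iff {n : ℕ} : 0 < orderOf (2 : ZMod n) ↔ Odd n := by
  rw [orderOf_pos_iff, isOfFinOrder_iff_isUnit, ← Nat.cast_ofNat, ZMod.isUnit_iff_coprime,
    Nat.coprime_two_left]

section Squaring
variable {G : Type*} [Group G]

theorem isPeriodicPt_sq_iff {u : G} {n : ℕ} :
    IsPeriodicPt (· ^ 2) n u ↔ (2 : ZMod (orderOf u)) ^ n = 1 := by
  rw [IsPeriodicPt, IsFixedPt, pow_iterate]
  nth_rw 2 [← pow_one u]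
  rw [pow_eq_pow_iff_modEq, ← ZMod.natCast_eq_natCast_iff]
  push_cast
  rfl

/-- `orderOf x` is by definition the minimal period of `(x * ·)` at `1`, so both sides are
minimal periods with the same set of periods. -/
theorem minimalPeriod_sq (u : G) :
    minimalPeriod (· ^ 2) u = orderOf (2 : ZMod (orderOf u)) := by
  rw [orderOf, minimalPeriod_eq_minimalPeriod_iff]
  intro n
  rw [isPeriodicPt_sq_iff, isPeriodicPt_mul_iff_pow_eq_one]

theorem mem_periodicPts_sq_iff {u : G} : u ∈ periodicPts (· ^ 2) ↔ Odd (orderOf u) := by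
  rw [← minimalPeriod_pos_iff_mem_periodicPts, minimalPeriod_sq, orderOf_two_pos_iff]

theorem periodicOrbitFinset_sq [DecidableEq G] (u : G) :
    periodicOrbitFinset (· ^ 2) u =
      (range (orderOf (2 : ZMod (orderOf u)))).image (u ^ 2 ^ ·) := by
  simp_rw [periodicOrbitFinset, minimalPeriod_sq, pow_iterate]

theorem orderOf_sq_of_odd {u : G} (hu : Odd (orderOf u)) : orderOf (u ^ 2) = orderOf u :=
  Nat.Coprime.orderOf_pow (Nat.coprime_two_right.mpr hu)

theorem card_image_periodicOrbitFinset_sq_mul [Fintype G] [DecidableEq G] {d : ℕ} (hd : Odd d) :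
    #(({u : G | orderOf u = d} : Finset G).image (periodicOrbitFinset (· ^ 2))) *
      orderOf (2 : ZMod d) = #{u : G | orderOf u = d} := by
  refine card_image_periodicOrbitFinset_mul ?_ ?_ (orderOf_two_pos_iff.mpr hd)
  · intro u hu
    simp only [coe_filter, mem_univ, true_and, Set.mem_ofPred_eq] at hu ⊢
    rw [orderOf_sq_of_odd (hu ▸ hd), hu]
  · intro u hu
    rw [minimalPeriod_sq, (mem_filter.mp hu).2]

end Squaring

theorem stmt_18_general (p k θ μ : ℕ) (hp : p.Prime) (hodd : Odd p)
    (hμ : Odd μ) (hφ : Nat.totient (p ^ k) = 2 ^ θ * μ) :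
    (∀ d : ℕ, d ∣ μ →
      ∃ c : Finset (Finset (ZMod (p ^ k))ˣ),
        c.card = Nat.totient d / orderOf (2 : ZMod d) ∧
        (∀ s ∈ c, ∃ u : (ZMod (p ^ k))ˣ, orderOf u = d ∧
          s = Finset.image (fun n : ℕ => u ^ (2 ^ n))
            (Finset.range (orderOf (2 : ZMod d)))) ∧
        (∀ u : (ZMod (p ^ k))ˣ, orderOf u = d → ∃ s ∈ c, u ∈ s) ∧
        (c : Set (Finset (ZMod (p ^ k))ˣ)).PairwiseDisjoint id) ∧
    (∀ u : (ZMod (p ^ k))ˣ,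
      ((∃ n : ℕ, 1 ≤ n ∧ (fun v : (ZMod (p ^ k))ˣ => v ^ 2)^[n] u = u) ↔ Odd (orderOf u)) ∧
      (Odd (orderOf u) →
        Function.minimalPeriod (fun v : (ZMod (p ^ k))ˣ => v ^ 2) u
          = orderOf (2 : ZMod (orderOf u)))) := by
  have : NeZero (p ^ k) := ⟨pow_ne_zero k hp.ne_zero⟩
  have hp2 : p ≠ 2 := by rintro rfl; exact Nat.not_odd_iff_even.mpr even_two hodd
  have := ZMod.isCyclic_units_of_prime_pow p hp hp2 k
  refine ⟨fun d hdμ => ?_, fun u => ⟨mem_periodicPts_sq_iff, fun _ => minimalPeriod_sq u⟩⟩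
  have hd : Odd d := hμ.of_dvd_nat hdμ
  have hcard : #{u : (ZMod (p ^ k))ˣ | orderOf u = d} = d.totient := by
    refine IsCyclic.card_orderOf_eq_totient ?_
    rw [ZMod.card_units_eq_totient, hφ]
    exact dvd_mul_of_dvd_right hdμ _
  have hper (u : (ZMod (p ^ k))ˣ) (hu : orderOf u = d) : u ∈ periodicPts (· ^ 2) :=
    mem_periodicPts_sq_iff.mpr (hu ▸ hd)
  refine ⟨({u | orderOf u = d} : Finset _).image (periodicOrbitFinset (· ^ 2)), ?_, ?_, ?_,
    pairwiseDisjoint_periodicOrbitFinset fun u hu => hper u (mem_filter.mp hu).2⟩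
  · rw [← hcard, ← card_image_periodicOrbitFinset_sq_mul hd,
      Nat.mul_div_cancel _ (orderOf_two_pos_iff.mpr hd)]
  · intro s hs
    obtain ⟨u, hu, rfl⟩ := mem_image.mp hs
    have hu := (mem_filter.mp hu).2
    exact ⟨u, hu, hu ▸ periodicOrbitFinset_sq u⟩
  · intro u hu
    exact ⟨_, mem_image_of_mem _ (mem_filter.mpr ⟨mem_univ u, hu⟩),
      self_mem_periodicOrbitFinset (hper u hu)⟩

theorem stmt_18 (p k θ μ : ℕ) (hp : p.Prime) (hodd : Odd p) (hk : 1 ≤ k)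
    (hμ : Odd μ) (hφ : Nat.totient (p ^ k) = 2 ^ θ * μ) :
    (∀ d : ℕ, d ∣ μ →
      ∃ c : Finset (Finset (ZMod (p ^ k))ˣ),
        c.card = Nat.totient d / orderOf (2 : ZMod d) ∧
        (∀ s ∈ c, ∃ u : (ZMod (p ^ k))ˣ, orderOf u = d ∧
          s = Finset.image (fun n : ℕ => u ^ (2 ^ n))
            (Finset.range (orderOf (2 : ZMod d)))) ∧
        (∀ u : (ZMod (p ^ k))ˣ, orderOf u = d → ∃ s ∈ c, u ∈ s) ∧
        (c : Set (Finset (ZMod (p ^ k))ˣ)).PairwiseDisjoint id) ∧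
    (∀ u : (ZMod (p ^ k))ˣ,
      ((∃ n : ℕ, 1 ≤ n ∧ (fun v : (ZMod (p ^ k))ˣ => v ^ 2)^[n] u = u) ↔ Odd (orderOf u)) ∧
      (Odd (orderOf u) →
        Function.minimalPeriod (fun v : (ZMod (p ^ k))ˣ => v ^ 2) u
          = orderOf (2 : ZMod (orderOf u)))) :=
  stmt_18_general p k θ μ hp hodd hμ hφ
end
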